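/- arXiv:2212.00896 — 2 statements merged into one kernel-verified Lean document; each statement's English description precedes it below -/
import Mathlib

section
/- Under the hypotheses of Maurey's empirical method (V := ∫_X Var_{ω∼μ}[φ(x,ω)] dπ(x) < ∞), for every N ∈ ℕ there exist points ω₁,…,ω_N ∈ Ω such that the function F̂_N(x) = (1/N) Σᵢ φ(x, ωᵢ) satisfies ‖F − F̂_N‖²_{L²(π)} ≤ V/N. -/
open MeasureTheory

/-- Expansion of the centered second moment: `∫ (g - ∫g)² = ∫ g² - (∫ g)²`. -/
lemma maurey_centered_sq {Ω : Type*} [MeasurableSpace Ω] (μ : Measure Ω)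
    [IsProbabilityMeasure μ] {g : Ω → ℝ} (hg : MemLp g 2 μ) :
    ∫ x, (g x - ∫ y, g y ∂μ) ^ 2 ∂μ = (∫ x, g x ^ 2 ∂μ) - (∫ x, g x ∂μ) ^ 2 := by
  set c : ℝ := ∫ y, g y ∂μ
  have hgi : Integrable g μ := hg.integrable one_le_two
  have hgsq : Integrable (fun x => g x ^ 2) μ := hg.integrable_sq
  have hexp : (fun x => (g x - c) ^ 2) = fun x => g x ^ 2 - (2 * c) * g x + c ^ 2 := by
    funext x; ring
  have hi1 : Integrable (fun x => g x ^ 2 - 2 * c * g x) μ :=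
    hgsq.sub (hgi.const_mul (2 * c))
  rw [hexp, integral_add hi1 (integrable_const _),
    integral_sub hgsq (hgi.const_mul (2 * c)), integral_const_mul, integral_const]
  simp only [measure_univ, probReal_univ, ENNReal.toReal_one, smul_eq_mul, one_mul, mul_one]
  ring

/-- Jensen / Cauchy–Schwarz for a probability measure: `(∫ g)² ≤ ∫ g²`. -/
lemma maurey_sq_integral_le {Ω : Type*} [MeasurableSpace Ω] (μ : Measure Ω)
    [IsProbabilityMeasure μ] {g : Ω → ℝ} (hg : MemLp g 2 μ) :
    (∫ x, g x ∂μ) ^ 2 ≤ ∫ x, g x ^ 2 ∂μ := by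
  have h0 : 0 ≤ ∫ x, (g x - ∫ y, g y ∂μ) ^ 2 ∂μ :=
    integral_nonneg fun x => sq_nonneg _
  rw [maurey_centered_sq μ hg] at h0
  linarith

/-- The key computation of Maurey's empirical method for a fixed `x`:
the expected squared error of the empirical mean of `N` i.i.d. samples equals
the variance divided by `N`. -/
lemma maurey_aux {Ω : Type*} [MeasurableSpace Ω] (μ : Measure Ω)
    [IsProbabilityMeasure μ] (N : ℕ) (hN : 0 < N) (f : Ω → ℝ) (hfm : Measurable f)
    (hf2 : MemLp f 2 μ) (c : ℝ) (hc : c = ∫ ω, f ω ∂μ) :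
    Integrable (fun ω : Fin N → Ω => (c - (N : ℝ)⁻¹ * ∑ i, f (ω i)) ^ 2)
      (Measure.pi fun _ => μ) ∧
    ∫ ω : Fin N → Ω, (c - (N : ℝ)⁻¹ * ∑ i, f (ω i)) ^ 2 ∂(Measure.pi fun _ => μ)
      = ((∫ ω, f ω ^ 2 ∂μ) - c ^ 2) / N := by
  classical
  letI : MeasureSpace Ω := ⟨μ⟩
  haveI : IsProbabilityMeasure (volume : Measure Ω) := ‹IsProbabilityMeasure μ›
  have hvol : (Measure.pi fun _ : Fin N => μ) = (volume : Measure (Fin N → Ω)) := rfl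
  haveI : IsProbabilityMeasure (Measure.pi fun _ : Fin N => μ) := by infer_instance
  set ψ : Ω → ℝ := fun ω => f ω - c with hψdef
  have hψ2 : MemLp ψ 2 μ := hf2.sub (memLp_const c)
  have hψi : Integrable ψ μ := hψ2.integrable one_le_two
  have hfi : Integrable f μ := hf2.integrable one_le_two
  have hψ0 : ∫ ω, ψ ω ∂μ = 0 := by
    simp only [hψdef]
    rw [integral_sub hfi (integrable_const c), integral_const]
    simp [hc]
  have hψsq : Integrable (fun ω => ψ ω ^ 2) μ := hψ2.integrable_sq
  have hψm : Measurable ψ := hfm.sub measurable_const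
  -- each product `ψ (ω i) * ψ (ω j)` as a product over coordinates
  set g : Fin N → Fin N → Fin N → Ω → ℝ := fun i j k y =>
    (if k = i then ψ y else 1) * (if k = j then ψ y else 1) with hgdef
  have step1 : ∀ i j : Fin N,
      (fun ω : Fin N → Ω => ψ (ω i) * ψ (ω j)) = fun ω => ∏ k, g i j k (ω k) := by
    intro i j
    funext ω
    simp only [hgdef, Finset.prod_mul_distrib, Finset.prod_ite_eq', Finset.mem_univ, if_true]
  have hg_int : ∀ i j k : Fin N, Integrable (g i j k) μ := by
    intro i j k
    by_cases h1 : k = i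
    · by_cases h2 : k = j
      · simp only [hgdef, if_pos h1, if_pos h2]
        simpa [pow_two] using hψsq
      · simp only [hgdef, if_pos h1, if_neg h2, mul_one]
        exact hψi
    · by_cases h2 : k = j
      · simp only [hgdef, if_neg h1, if_pos h2, one_mul]
        exact hψi
      · simp only [hgdef, if_neg h1, if_neg h2, mul_one]
        exact integrable_const 1
  have hg_val : ∀ i j k : Fin N, (∫ y, g i j k y ∂μ)
      = if k = i then (if k = j then ∫ y, ψ y ^ 2 ∂μ else 0)
        else (if k = j then 0 else 1) := by
    intro i j k
    by_cases h1 : k = i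
    · by_cases h2 : k = j
      · simp only [hgdef, if_pos h1, if_pos h2]
        simp [pow_two]
      · simp only [hgdef, if_pos h1, if_neg h2, mul_one]
        exact hψ0
    · by_cases h2 : k = j
      · simp only [hgdef, if_neg h1, if_pos h2, one_mul]
        exact hψ0
      · simp only [hgdef, if_neg h1, if_neg h2, mul_one]
        simp
  have hint : ∀ i j : Fin N,
      Integrable (fun ω : Fin N → Ω => ψ (ω i) * ψ (ω j)) (Measure.pi fun _ => μ) := by
    intro i j
    rw [step1 i j, hvol]
    exact Integrable.fintype_prod (𝕜 := ℝ) fun k => hg_int i j k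
  have hval : ∀ i j : Fin N,
      (∫ ω : Fin N → Ω, ψ (ω i) * ψ (ω j) ∂(Measure.pi fun _ => μ))
        = if i = j then ∫ y, ψ y ^ 2 ∂μ else 0 := by
    intro i j
    rw [step1 i j, MeasureTheory.integral_fintype_prod_eq_prod (g i j)]
    have : ∀ k : Fin N, (∫ y, g i j k y) = (∫ y, g i j k y ∂μ) := fun _ => rfl
    simp_rw [hg_val]
    by_cases hij : i = j
    · subst hij
      have : ∀ k : Fin N,
          (if k = i then (if k = i then ∫ y, ψ y ^ 2 ∂μ else 0) else (if k = i then 0 else 1))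
            = if k = i then ∫ y, ψ y ^ 2 ∂μ else 1 := by
        intro k; by_cases h : k = i <;> simp [h]
      simp_rw [this]
      simp [Finset.prod_ite_eq']
    · rw [Finset.prod_eq_zero (Finset.mem_univ i)]
      · simp [hij]
      · simp [Ne.symm hij, hij]
  -- expand the square of the sum
  have hexpand : (fun ω : Fin N → Ω => (∑ i, ψ (ω i)) ^ 2)
      = fun ω => ∑ i, ∑ j, ψ (ω i) * ψ (ω j) := by
    funext ω
    rw [pow_two, Finset.sum_mul_sum]
  have hsum_int : Integrable (fun ω : Fin N → Ω => (∑ i, ψ (ω i)) ^ 2)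
      (Measure.pi fun _ => μ) := by
    rw [hexpand]
    exact integrable_finset_sum _ fun i _ => integrable_finset_sum _ fun j _ => hint i j
  have hsum_val : ∫ ω : Fin N → Ω, (∑ i, ψ (ω i)) ^ 2 ∂(Measure.pi fun _ => μ)
      = N * ∫ y, ψ y ^ 2 ∂μ := by
    rw [hexpand, integral_finset_sum _ fun i _ => integrable_finset_sum _ fun j _ => hint i j]
    have : ∀ i : Fin N, (∑ j, if i = j then ∫ y, ψ y ^ 2 ∂μ else 0) = ∫ y, ψ y ^ 2 ∂μ := by
      intro i; simp [Finset.sum_ite_eq]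
    calc (∑ i : Fin N, ∫ ω : Fin N → Ω, ∑ j, ψ (ω i) * ψ (ω j) ∂(Measure.pi fun _ => μ))
        = ∑ i : Fin N, ∑ j : Fin N, if i = j then ∫ y, ψ y ^ 2 ∂μ else 0 := by
          refine Finset.sum_congr rfl fun i _ => ?_
          rw [integral_finset_sum _ fun j _ => hint i j]
          exact Finset.sum_congr rfl fun j _ => hval i j
      _ = ∑ _i : Fin N, ∫ y, ψ y ^ 2 ∂μ := Finset.sum_congr rfl fun i _ => this i
      _ = N * ∫ y, ψ y ^ 2 ∂μ := by
          rw [Finset.sum_const, Finset.card_univ, Fintype.card_fin, nsmul_eq_mul]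
  -- rewrite the target integrand
  have hNne : (N : ℝ) ≠ 0 := Nat.cast_ne_zero.mpr hN.ne'
  have key : (fun ω : Fin N → Ω => (c - (N : ℝ)⁻¹ * ∑ i, f (ω i)) ^ 2)
      = fun ω => ((N : ℝ)⁻¹) ^ 2 * (∑ i, ψ (ω i)) ^ 2 := by
    funext ω
    have hsum : ∑ i, ψ (ω i) = (∑ i, f (ω i)) - N * c := by
      simp only [hψdef, Finset.sum_sub_distrib, Finset.sum_const, Finset.card_univ,
        Fintype.card_fin, nsmul_eq_mul]
    have : c - (N : ℝ)⁻¹ * ∑ i, f (ω i) = -((N : ℝ)⁻¹ * ∑ i, ψ (ω i)) := by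
      rw [hsum, mul_sub]
      field_simp
      ring
    rw [this]
    ring
  have hψsq_val : ∫ y, ψ y ^ 2 ∂μ = (∫ ω, f ω ^ 2 ∂μ) - c ^ 2 := by
    have := maurey_centered_sq μ hf2
    rw [← hc] at this
    exact this
  constructor
  · rw [key]
    exact hsum_int.const_mul _
  · rw [key, integral_const_mul, hsum_val, hψsq_val]
    field_simp

/-- Maurey's empirical method, selection form: there exist `N` parameter points
`ω₁, …, ω_N` such that the empirical average `F̂_N` satisfies
`‖F − F̂_N‖²_{L²(π)} ≤ V/N`. -/
theorem maurey_selection {X Ω : Type*} [MeasurableSpace X] [MeasurableSpace Ω]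
    (π : Measure X) (μ : Measure Ω) [IsProbabilityMeasure π] [IsProbabilityMeasure μ]
    (φ : X × Ω → ℝ) (hφ : Measurable φ) (hφL2 : MemLp φ 2 (π.prod μ))
    (F : X → ℝ) (hF : ∀ x, F x = ∫ ω, φ (x, ω) ∂μ)
    (V : ℝ) (hV : V = ∫ x, ((∫ ω, (φ (x, ω)) ^ 2 ∂μ) - (∫ ω, φ (x, ω) ∂μ) ^ 2) ∂π)
    (N : ℕ) (hN : 0 < N) :
    ∃ ω : Fin N → Ω,
      ∫ x, (F x - (N : ℝ)⁻¹ * ∑ i : Fin N, φ (x, ω i)) ^ 2 ∂π ≤ V / N := by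
  classical
  set Λ : Measure (Fin N → Ω) := Measure.pi fun _ => μ with hΛdef
  haveI : IsProbabilityMeasure Λ := by rw [hΛdef]; infer_instance
  -- measurability of F
  have hFeq : F = fun x => ∫ ω, φ (x, ω) ∂μ := funext hF
  have hFsm : StronglyMeasurable F := by
    rw [hFeq]; exact hφ.stronglyMeasurable.integral_prod_right'
  -- the error function on the product space
  set e : X × (Fin N → Ω) → ℝ :=
    fun p => (F p.1 - (N : ℝ)⁻¹ * ∑ i, φ (p.1, p.2 i)) ^ 2 with hedef
  have he_m : Measurable e := by
    apply Measurable.pow_const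
    apply (hFsm.measurable.comp measurable_fst).sub
    apply Measurable.const_mul
    exact Finset.measurable_sum _ fun i _ =>
      hφ.comp (measurable_fst.prodMk ((measurable_pi_apply i).comp measurable_snd))
  -- integrability facts
  have hsq_int : Integrable (fun p => φ p ^ 2) (π.prod μ) := hφL2.integrable_sq
  have haex : ∀ᵐ x ∂π, MemLp (fun ω => φ (x, ω)) 2 μ := by
    filter_upwards [hsq_int.prod_right_ae] with x hx
    exact (memLp_two_iff_integrable_sq
      ((hφ.comp measurable_prodMk_left).aestronglyMeasurable)).mpr hx
  set v : X → ℝ := fun x => (∫ ω, φ (x, ω) ^ 2 ∂μ) - (∫ ω, φ (x, ω) ∂μ) ^ 2 with hvdef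
  have hVv : V = ∫ x, v x ∂π := hV
  have hv_nonneg : ∀ᵐ x ∂π, 0 ≤ v x := by
    filter_upwards [haex] with x hx
    have := maurey_sq_integral_le μ hx
    simp only [hvdef]
    linarith
  have hsqint_left : Integrable (fun x => ∫ ω, φ (x, ω) ^ 2 ∂μ) π :=
    hsq_int.integral_prod_left
  have hF2int : Integrable (fun x => (∫ ω, φ (x, ω) ∂μ) ^ 2) π := by
    refine Integrable.mono' hsqint_left
      ((hFsm.pow 2).aestronglyMeasurable.congr ?_) ?_
    · filter_upwards with x
      simp [hFeq]
    · filter_upwards [haex] with x hx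
      have h1 := maurey_sq_integral_le μ hx
      have h2 : 0 ≤ (∫ ω, φ (x, ω) ∂μ) ^ 2 := sq_nonneg _
      rw [Real.norm_eq_abs, abs_of_nonneg h2]
      exact h1
  have hvint : Integrable v π := hsqint_left.sub hF2int
  have hVnonneg : 0 ≤ V := hVv ▸ integral_nonneg_of_ae hv_nonneg
  have hVNnonneg : 0 ≤ V / N := div_nonneg hVnonneg (Nat.cast_nonneg N)
  -- the lintegral of the error, as a function of the sample
  set G : (Fin N → Ω) → ENNReal := fun ω => ∫⁻ x, ENNReal.ofReal (e (x, ω)) ∂π with hGdef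
  have hGm : Measurable G := (he_m.ennreal_ofReal).lintegral_prod_left'
  -- compute the average of G over samples
  have key2 : ∀ᵐ x ∂π, (∫⁻ ω, ENNReal.ofReal (e (x, ω)) ∂Λ) = ENNReal.ofReal (v x / N) := by
    filter_upwards [haex] with x hx
    have hfm : Measurable fun ω => φ (x, ω) := hφ.comp measurable_prodMk_left
    obtain ⟨hint, hval⟩ := maurey_aux μ N hN (fun ω => φ (x, ω)) hfm hx (F x) (hF x)
    have heq : (fun ω : Fin N → Ω => e (x, ω))
        = fun ω => (F x - (N : ℝ)⁻¹ * ∑ i, φ (x, ω i)) ^ 2 := rfl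
    rw [← ofReal_integral_eq_lintegral_ofReal (by rw [heq] at *; exact hint)
      (Filter.Eventually.of_forall fun ω => sq_nonneg _)]
    congr 1
    rw [heq] at *
    rw [hval, hvdef, hF x]
  have hGint : ∫⁻ ω, G ω ∂Λ = ENNReal.ofReal (V / N) := by
    have hswap : ∫⁻ ω, G ω ∂Λ = ∫⁻ x, ∫⁻ ω, ENNReal.ofReal (e (x, ω)) ∂Λ ∂π := by
      exact (lintegral_lintegral_swap (he_m.ennreal_ofReal).aemeasurable).symm
    rw [hswap, lintegral_congr_ae key2,
      ← ofReal_integral_eq_lintegral_ofReal (hvint.div_const N) ?_]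
    · congr 1
      rw [hVv, integral_div]
    · filter_upwards [hv_nonneg] with x hx
      exact div_nonneg hx (Nat.cast_nonneg N)
  -- select a good sample
  obtain ⟨ω₀, hω₀⟩ := exists_le_lintegral (μ := Λ) hGm.aemeasurable
  refine ⟨ω₀, ?_⟩
  rw [hGint] at hω₀
  have hle : (∫⁻ x, ENNReal.ofReal (e (x, ω₀)) ∂π) ≤ ENNReal.ofReal (V / N) := hω₀
  have hmeas : AEStronglyMeasurable (fun x => e (x, ω₀)) π :=
    (he_m.comp (measurable_id.prodMk measurable_const)).aestronglyMeasurable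
  have : ∫ x, e (x, ω₀) ∂π ≤ V / N := by
    rw [integral_eq_lintegral_of_nonneg_ae
      (Filter.Eventually.of_forall fun x => sq_nonneg _) hmeas]
    exact ENNReal.toReal_le_of_le_ofReal hVNnonneg hle
  exact this
end

section
/- Lower bound on minimum control energy: Let f : ℝᵈ → ℝᵈ and g : ℝᵈ → Mat(d×d, ℝ) with g(z)g(z)ᵀ ⪯ λ₁ I for all z (λ₁ > 0). Suppose u : [0,T] → ℝᵈ is a control such that the solution of x'(t) = f(x(t)) + g(x(t))u(t), x(0) = x, satisfies x(T) = y, and let φ_t denote the flow of the uncontrolled system x' = f(x). If the nonlinear variation-of-parameters identity y − φ_T(x) = ∫₀ᵀ D(φ_{T−t})(x^u(t)) g(x^u(t)) u(t) dt holds (where x^u(·) is the controlled trajectory and D denotes the Jacobian), then (1/2)∫₀ᵀ |u(t)|² dt ≥ |y − φ_T(x)|² / (2 λ₁ S_T(f)), where S_T(f) = ∫₀ᵀ sup_{z ∈ ℝᵈ} ‖D(φ_{T−t})(z)‖² dt, assumed finite. -/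
open Matrix MeasureTheory
open scoped RealInnerProductSpace

/-- The operator norm of a real `d × d` matrix, induced by the Euclidean norm. -/
noncomputable def matOpNorm {d : ℕ} (A : Matrix (Fin d) (Fin d) ℝ) : ℝ :=
  ‖Matrix.toEuclideanCLM (𝕜 := ℝ) A‖

/-- Lower bound on the minimum control energy: if the control `u` steers
`x' = f(x) + g(x)u` from `x` to `y` in time `T` (expressed through the nonlinear
variation-of-parameters identity), and `g(z)g(z)ᵀ ⪯ lam1 I`, then
`(1/2)∫₀ᵀ|u|² ≥ |y − φ_T(x)|²/(2lam1 S_T(f))` with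
`S_T(f) = ∫₀ᵀ sup_z ‖D(φ_{T−t})(z)‖² dt`. -/
theorem min_energy_lower_bound {d : ℕ} (T : ℝ) (hT : 0 < T) (lam1 : ℝ) (hlam1 : 0 < lam1)
    (g : EuclideanSpace ℝ (Fin d) → Matrix (Fin d) (Fin d) ℝ)
    -- ellipticity upper bound `g(z)g(z)ᵀ ⪯ lam1 I`, i.e. `‖g(z)v‖² ≤ lam1|v|²`
    (hg : ∀ z v, ‖(Matrix.toEuclideanCLM (𝕜 := ℝ) (g z)) v‖ ^ 2 ≤ lam1 * ‖v‖ ^ 2)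
    -- `Dφ s z` is the Jacobian of the flow map `φ_s` of `x' = f(x)` at the point `z`
    (Dφ : ℝ → EuclideanSpace ℝ (Fin d) → Matrix (Fin d) (Fin d) ℝ)
    (hbdd : ∀ s : ℝ, BddAbove (Set.range fun z => matOpNorm (Dφ s z)))
    -- the quantity `S_T(f)`, assumed finite (interval integrable)
    (S : ℝ) (hS : S = ∫ t in (0 : ℝ)..T, (⨆ z, matOpNorm (Dφ (T - t) z)) ^ 2)
    (hSpos : 0 < S)
    (hSint : IntervalIntegrable (fun t => (⨆ z, matOpNorm (Dφ (T - t) z)) ^ 2)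
      volume 0 T)
    -- the control, the controlled trajectory, and the endpoint of the free flow
    (u : ℝ → EuclideanSpace ℝ (Fin d)) (hu : Continuous u)
    (xu : ℝ → EuclideanSpace ℝ (Fin d))
    (x y φTx : EuclideanSpace ℝ (Fin d)) (hx0 : xu 0 = x) (hxT : xu T = y)
    (hcont : ContinuousOn (fun t =>
      (Matrix.toEuclideanCLM (𝕜 := ℝ) (Dφ (T - t) (xu t)))
        ((Matrix.toEuclideanCLM (𝕜 := ℝ) (g (xu t))) (u t))) (Set.Icc 0 T))
    -- nonlinear variation-of-parameters identity
    (hid : y - φTx = ∫ t in (0 : ℝ)..T,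
      (Matrix.toEuclideanCLM (𝕜 := ℝ) (Dφ (T - t) (xu t)))
        ((Matrix.toEuclideanCLM (𝕜 := ℝ) (g (xu t))) (u t))) :
    ‖y - φTx‖ ^ 2 / (2 * lam1 * S) ≤ (1 / 2) * ∫ t in (0 : ℝ)..T, ‖u t‖ ^ 2 := by
  set M : ℝ → ℝ := fun t => ⨆ z, matOpNorm (Dφ (T - t) z) with hM
  set F : ℝ → EuclideanSpace ℝ (Fin d) := fun t =>
    (Matrix.toEuclideanCLM (𝕜 := ℝ) (Dφ (T - t) (xu t)))
      ((Matrix.toEuclideanCLM (𝕜 := ℝ) (g (xu t))) (u t)) with hF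
  set J : ℝ := ∫ t in (0 : ℝ)..T, ‖u t‖ ^ 2 with hJ
  have hJ0 : 0 ≤ J := by
    rw [hJ]
    apply intervalIntegral.integral_nonneg hT.le
    intro t _; positivity
  have hM0 : ∀ t, 0 ≤ M t := by
    intro t
    refine le_trans ?_ (le_ciSup (hbdd (T - t)) (0 : EuclideanSpace ℝ (Fin d)))
    exact norm_nonneg _
  set μ : Measure ℝ := volume.restrict (Set.Ioc (0 : ℝ) T) with hμ
  have hMsq_int : Integrable (fun t => M t ^ 2) μ := hSint.1
  have hMmeas : AEStronglyMeasurable M μ := by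
    have h2 : AEStronglyMeasurable (fun t => M t ^ 2) μ := hMsq_int.aestronglyMeasurable
    have : M = fun t => Real.sqrt (M t ^ 2) := funext fun t => (Real.sqrt_sq (hM0 t)).symm
    rw [this]
    exact Real.continuous_sqrt.comp_aestronglyMeasurable h2
  have hMemM : MemLp M 2 μ := (memLp_two_iff_integrable_sq hMmeas).mpr hMsq_int
  have hUsq_int : Integrable (fun t => ‖u t‖ ^ 2) μ := ((hu.norm.pow 2).integrableOn_Ioc)
  have hMemU : MemLp (fun t => ‖u t‖) 2 μ :=
    (memLp_two_iff_integrable_sq hu.norm.aestronglyMeasurable).mpr hUsq_int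
  -- pointwise bound
  have hpt : ∀ t ∈ Set.Icc (0 : ℝ) T, ‖F t‖ ≤ M t * (Real.sqrt lam1 * ‖u t‖) := by
    intro t _
    have h1 : ‖(Matrix.toEuclideanCLM (𝕜 := ℝ) (g (xu t))) (u t)‖ ≤ Real.sqrt lam1 * ‖u t‖ := by
      have := Real.sqrt_le_sqrt (hg (xu t) (u t))
      rwa [Real.sqrt_sq (norm_nonneg _), Real.sqrt_mul hlam1.le,
        Real.sqrt_sq (norm_nonneg _)] at this
    have h2 : ‖F t‖ ≤ matOpNorm (Dφ (T - t) (xu t)) *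
        ‖(Matrix.toEuclideanCLM (𝕜 := ℝ) (g (xu t))) (u t)‖ :=
      ContinuousLinearMap.le_opNorm _ _
    have h3 : matOpNorm (Dφ (T - t) (xu t)) ≤ M t := le_ciSup (hbdd (T - t)) (xu t)
    calc ‖F t‖ ≤ matOpNorm (Dφ (T - t) (xu t)) *
        ‖(Matrix.toEuclideanCLM (𝕜 := ℝ) (g (xu t))) (u t)‖ := h2
      _ ≤ M t * (Real.sqrt lam1 * ‖u t‖) := by
          apply mul_le_mul h3 h1 (norm_nonneg _) (hM0 t)
  -- integrability of the product bound
  have hGint : IntervalIntegrable (fun t => M t * (Real.sqrt lam1 * ‖u t‖)) volume 0 T := by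
    rw [intervalIntegrable_iff_integrableOn_Ioc_of_le hT.le]
    have hbound : Integrable (fun t => (M t ^ 2 + (Real.sqrt lam1 * ‖u t‖) ^ 2) / 2) μ := by
      apply Integrable.div_const
      exact hMsq_int.add ((((continuous_const.mul hu.norm)).pow 2).integrableOn_Ioc)
    refine Integrable.mono' hbound ?_ ?_
    · exact hMmeas.mul ((continuous_const.mul hu.norm).aestronglyMeasurable)
    · refine Filter.Eventually.of_forall fun t => ?_
      have hb : 0 ≤ Real.sqrt lam1 * ‖u t‖ := by positivity
      rw [Real.norm_eq_abs, abs_mul, abs_of_nonneg (hM0 t), abs_of_nonneg hb]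
      nlinarith [sq_nonneg (M t - Real.sqrt lam1 * ‖u t‖)]
  have hFint : IntervalIntegrable F volume 0 T := by
    apply ContinuousOn.intervalIntegrable
    rwa [Set.uIcc_of_le hT.le]
  -- step 1 : ‖y - φTx‖ ≤ ∫ M * (√λ ‖u‖)
  have hstep1 : ‖y - φTx‖ ≤ ∫ t in (0 : ℝ)..T, M t * (Real.sqrt lam1 * ‖u t‖) := by
    rw [hid]
    calc ‖∫ t in (0 : ℝ)..T, F t‖ ≤ ∫ t in (0 : ℝ)..T, ‖F t‖ :=
        intervalIntegral.norm_integral_le_integral_norm hT.le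
      _ ≤ ∫ t in (0 : ℝ)..T, M t * (Real.sqrt lam1 * ‖u t‖) :=
        intervalIntegral.integral_mono_on hT.le hFint.norm hGint hpt
  -- step 2 : Cauchy–Schwarz
  have hrpow2 : ∀ x : ℝ, x ^ (2 : ℝ) = x ^ 2 := fun x => by
    rw [show (2 : ℝ) = ((2 : ℕ) : ℝ) by norm_num, Real.rpow_natCast]
  have hCS : ∫ t, M t * ‖u t‖ ∂μ ≤ Real.sqrt S * Real.sqrt J := by
    have hpq : Real.HolderConjugate 2 2 := Real.HolderConjugate.two_two
    have h2 : (ENNReal.ofReal (2 : ℝ)) = 2 := by norm_num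
    have hMemM' : MemLp M (ENNReal.ofReal (2 : ℝ)) μ := by rw [h2]; exact hMemM
    have hMemU' : MemLp (fun t => ‖u t‖) (ENNReal.ofReal (2 : ℝ)) μ := by rw [h2]; exact hMemU
    have key := integral_mul_le_Lp_mul_Lq_of_nonneg hpq
      (Filter.Eventually.of_forall fun t => hM0 t)
      (Filter.Eventually.of_forall fun t => norm_nonneg (u t))
      hMemM' hMemU'
    simp only [hrpow2] at key
    rw [← Real.sqrt_eq_rpow, ← Real.sqrt_eq_rpow] at key
    have hSμ : S = ∫ t, M t ^ 2 ∂μ := by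
      rw [hS, intervalIntegral.integral_of_le hT.le]
    have hJμ : J = ∫ t, ‖u t‖ ^ 2 ∂μ := by
      rw [hJ, intervalIntegral.integral_of_le hT.le]
    rw [hSμ, hJμ]
    exact key
  -- combine
  have hmain : ‖y - φTx‖ ≤ Real.sqrt lam1 * (Real.sqrt S * Real.sqrt J) := by
    refine hstep1.trans ?_
    have heq : (∫ t in (0 : ℝ)..T, M t * (Real.sqrt lam1 * ‖u t‖)) =
        Real.sqrt lam1 * ∫ t, M t * ‖u t‖ ∂μ := by
      rw [intervalIntegral.integral_of_le hT.le, ← MeasureTheory.integral_const_mul]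
      exact integral_congr_ae (Filter.Eventually.of_forall fun t => by ring)
    rw [heq]
    exact mul_le_mul_of_nonneg_left hCS (Real.sqrt_nonneg _)
  have hsq : ‖y - φTx‖ ^ 2 ≤ lam1 * S * J := by
    have h1 : Real.sqrt lam1 ^ 2 = lam1 := Real.sq_sqrt hlam1.le
    have h2 : Real.sqrt S ^ 2 = S := Real.sq_sqrt hSpos.le
    have h3 : Real.sqrt J ^ 2 = J := Real.sq_sqrt hJ0
    have hp := pow_le_pow_left₀ (norm_nonneg _) hmain 2
    rw [mul_pow, mul_pow, h1, h2, h3] at hp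
    linarith [hp]
  rw [div_le_iff₀ (by positivity)]
  nlinarith [hsq]
end
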